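/- Fix a point s ∈ ℝ² and a real number γ > 0. Then ε^{1+γ} · sup{ ‖Dχ_{ε,s}(x)‖ : x ∈ ℝ², ε² < ‖x − s‖ < ε } tends to 0 as ε tends to 0 from the right. (This is property (2) of the truncating functions: ε^{1+γ} ‖∂_x χ_ε‖_∞ → 0 for every γ > 0.) -/

import Mathlib

/-- The plane ℝ² with the Euclidean norm. -/
abbrev E2 : Type := EuclideanSpace ℝ (Fin 2)

/-- The truncating (cutoff) function `χ_{ε,s}` of the paper. -/
noncomputable def chiCut (s : E2) (ε : ℝ) (x : E2) : ℝ :=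
  if ‖x - s‖ ≤ ε ^ 2 then 0
  else if ‖x - s‖ < ε then Real.exp ((ε - ‖x - s‖) / (ε ^ 2 - ‖x - s‖))
  else 1

/-! On the annulus `χ_{ε,s}(x) = g(‖x - s‖)` with `g(r) = exp ((ε - r) / (ε² - r))`. Substituting
`u = (ε - ε²) / (r - ε²) ≥ 0` gives `g'(r) = e^{1-u} u² / (ε - ε²)`, and `u² e^{-u} ≤ 2`, so `g` is
`2e / (ε - ε²)`-Lipschitz on `r > ε²`. Since the norm is 1-Lipschitz, `‖Dχ_{ε,s}‖ ≤ 2e / (ε - ε²)`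
on the annulus, whence `ε^{1+γ} sup ‖Dχ_{ε,s}‖ ≤ 2e ε^γ / (1 - ε) → 0`. -/

open Filter Topology Real

noncomputable def cutoffProfile (a b r : ℝ) : ℝ := exp ((b - r) / (a - r))

lemma sq_mul_exp_neg_le_two {u : ℝ} (hu : 0 ≤ u) : u ^ 2 * exp (-u) ≤ 2 := by
  have h := pow_div_factorial_le_exp _ hu 2
  rw [exp_neg, ← div_eq_mul_inv, div_le_iff₀ (exp_pos u)]
  norm_num [Nat.factorial] at h
  linarith

lemma hasDerivAt_cutoffProfile (a b : ℝ) {r : ℝ} (hr : r ≠ a) :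
    HasDerivAt (cutoffProfile a b) (cutoffProfile a b r * ((b - a) / (a - r) ^ 2)) r := by
  have hne : a - r ≠ 0 := sub_ne_zero.2 hr.symm
  convert (((hasDerivAt_id r).const_sub b).div ((hasDerivAt_id r).const_sub a) hne).exp using 1
  · rfl
  · simp only [cutoffProfile, Pi.div_apply, id]
    ring

lemma abs_deriv_cutoffProfile_le {a b r : ℝ} (hab : a < b) (hr : a < r) :
    |cutoffProfile a b r * ((b - a) / (a - r) ^ 2)| ≤ 2 * exp 1 / (b - a) := by
  have hba : 0 < b - a := sub_pos.2 hab
  have hra : r - a ≠ 0 := (sub_pos.2 hr).ne'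
  have hexp : (b - r) / (a - r) = 1 + -((b - a) / (r - a)) := by
    rw [← neg_sub r a, div_neg]; field_simp; ring
  have hfac : (b - a) / (a - r) ^ 2 = ((b - a) / (r - a)) ^ 2 / (b - a) := by
    rw [← neg_sub r a, neg_sq]; field_simp
  have hu : 0 ≤ (b - a) / (r - a) := div_nonneg hba.le (sub_pos.2 hr).le
  rw [cutoffProfile, hexp, hfac, abs_of_nonneg (by positivity), exp_add]
  calc _ = exp 1 * (((b - a) / (r - a)) ^ 2 * exp (-((b - a) / (r - a)))) / (b - a) := by
        ring
    _ ≤ exp 1 * 2 / (b - a) := by gcongr; exact sq_mul_exp_neg_le_two hu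
    _ = 2 * exp 1 / (b - a) := by ring

lemma norm_cutoffProfile_sub_le {a b r r' : ℝ} (hab : a < b) (hr : a < r) (hr' : a < r') :
    ‖cutoffProfile a b r' - cutoffProfile a b r‖ ≤ 2 * exp 1 / (b - a) * ‖r' - r‖ :=
  (convex_Ioi a).norm_image_sub_le_of_norm_hasDerivWithin_le
    (fun _ ht => (hasDerivAt_cutoffProfile a b (ne_of_gt ht)).hasDerivWithinAt)
    (fun _ ht => abs_deriv_cutoffProfile_le hab ht) hr hr'

lemma chiCut_eq_cutoffProfile {s x : E2} {ε : ℝ} (h₁ : ε ^ 2 < ‖x - s‖) (h₂ : ‖x - s‖ < ε) :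
    chiCut s ε x = cutoffProfile (ε ^ 2) ε ‖x - s‖ := by
  rw [chiCut, if_neg h₁.not_ge, if_pos h₂, cutoffProfile]

lemma norm_fderiv_chiCut_le {s x : E2} {ε : ℝ} (h₁ : ε ^ 2 < ‖x - s‖) (h₂ : ‖x - s‖ < ε) :
    ‖fderiv ℝ (chiCut s ε) x‖ ≤ 2 * exp 1 / (ε - ε ^ 2) := by
  have hε : ε ^ 2 < ε := h₁.trans h₂
  have hnhds : ∀ᶠ y in 𝓝 x, ε ^ 2 < ‖y - s‖ ∧ ‖y - s‖ < ε :=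
    (isOpen_Ioo.preimage (continuous_id.sub continuous_const).norm).mem_nhds ⟨h₁, h₂⟩
  refine norm_fderiv_le_of_lip' ℝ (div_nonneg (by positivity) (sub_pos.2 hε).le) ?_
  filter_upwards [hnhds] with y hy
  rw [chiCut_eq_cutoffProfile hy.1 hy.2, chiCut_eq_cutoffProfile h₁ h₂]
  calc _ ≤ 2 * exp 1 / (ε - ε ^ 2) * ‖‖y - s‖ - ‖x - s‖‖ :=
        norm_cutoffProfile_sub_le hε h₁ hy.1
    _ ≤ 2 * exp 1 / (ε - ε ^ 2) * ‖y - x‖ := by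
        gcongr
        simpa using abs_norm_sub_norm_le (y - s) (x - s)

lemma sSup_norm_fderiv_chiCut_le (s : E2) {ε : ℝ} (hε : ε ^ 2 < ε) :
    sSup ((fun x : E2 => ‖fderiv ℝ (chiCut s ε) x‖) ''
        {x : E2 | ε ^ 2 < ‖x - s‖ ∧ ‖x - s‖ < ε}) ≤ 2 * exp 1 / (ε - ε ^ 2) := by
  refine Real.sSup_le ?_ (div_nonneg (by positivity) (sub_pos.2 hε).le)
  rintro _ ⟨x, hx, rfl⟩
  exact norm_fderiv_chiCut_le hx.1 hx.2

/-- property (2) of the truncating functions: for every `γ > 0`,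
`ε^{1+γ} · sup { ‖Dχ_{ε,s}(x)‖ : ε² < ‖x - s‖ < ε } → 0` as `ε → 0⁺`. -/
theorem chiCut_eps_pow_sup_fderiv_tendsto_zero (s : E2) (γ : ℝ) (hγ : 0 < γ) :
    Filter.Tendsto
      (fun ε : ℝ => ε ^ (1 + γ) *
        sSup ((fun x : E2 => ‖fderiv ℝ (chiCut s ε) x‖) ''
          {x : E2 | ε ^ 2 < ‖x - s‖ ∧ ‖x - s‖ < ε}))
      (nhdsWithin 0 (Set.Ioi 0)) (nhds 0) := by
  have hlim : Tendsto (fun ε : ℝ => 2 * exp 1 / (1 - ε) * ε ^ γ) (𝓝[>] 0) (𝓝 0) := by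
    have hcont : ContinuousAt (fun ε : ℝ => 2 * exp 1 / (1 - ε) * ε ^ γ) 0 :=
      (continuousAt_const.div (by fun_prop) (by norm_num)).mul
        (continuousAt_rpow_const 0 γ (Or.inr hγ.le))
    simpa [zero_rpow hγ.ne'] using hcont.tendsto.mono_left nhdsWithin_le_nhds
  refine squeeze_zero' ?_ ?_ hlim
  · filter_upwards [self_mem_nhdsWithin] with ε (hε : 0 < ε)
    refine mul_nonneg (rpow_nonneg hε.le _) (Real.sSup_nonneg ?_)
    rintro _ ⟨x, -, rfl⟩
    exact norm_nonneg _
  · filter_upwards [Ioo_mem_nhdsGT one_pos] with ε ⟨hε₀, hε₁⟩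
    have hε : ε ^ 2 < ε := by nlinarith
    calc _ ≤ ε ^ (1 + γ) * (2 * exp 1 / (ε - ε ^ 2)) := by
          gcongr
          exact sSup_norm_fderiv_chiCut_le s hε
      _ = 2 * exp 1 / (1 - ε) * ε ^ γ := by
          rw [rpow_add hε₀, rpow_one]
          field_simp [(sub_pos.2 hε₁).ne', (sub_pos.2 hε).ne']
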